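/- arXiv:2605.19584 — 7 statements merged into one kernel-verified Lean document; each statement's English description precedes it below -/
import Mathlib

section
/- Under the hypotheses of the mean-reversion MGF lemma (X_n adapted, |X_n| ≤ σ/2, E[X_{n+1}|F_n]·S_n ≤ 0), one has for every λ ≥ 0 and n ≥ 1: E[exp(λ S_n)] ≤ n·exp(nλ²σ²/2) + n·exp(λ). -/
open MeasureTheory Finset Real

/-!
Write `u = λσ/2` and `m = E[X (k+1) | ℱ k]`. Since `exp` lies below its chord on
`[-σ/2, σ/2]`, `E[exp (λ X (k+1)) | ℱ k] ≤ cosh u + (2m/σ) sinh u`. Where `S k > 0`,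
mean reversion gives `m ≤ 0`, and `cosh u ≤ exp (u²/2)` finishes; where `S k ≤ 0`, the factor
`exp (λ S k) ≤ 1` absorbs `cosh u + sinh u = exp u ≤ exp (2u²) + 1`. Hence
`E[exp (λ S (k+1))] ≤ c E[exp (λ S k)] + 1` with `c = exp (λ²σ²/2)`, and Bernoulli's inequality
turns this recursion into `n cⁿ + n`.
-/

lemma exp_mul_le_cosh_add_div_mul_sinh {a x t : ℝ} (ha : 0 < a) (hx : |x| ≤ a) :
    exp (t * x) ≤ cosh (t * a) + x / a * sinh (t * a) := by
  obtain ⟨hx₁, hx₂⟩ := abs_le.1 hx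
  have h := convexOn_exp.2 (Set.mem_univ (t * a)) (Set.mem_univ (-(t * a)))
    (div_nonneg (by linarith : 0 ≤ a + x) (by positivity : 0 ≤ 2 * a))
    (div_nonneg (by linarith : 0 ≤ a - x) (by positivity : 0 ≤ 2 * a))
    (by field_simp; ring)
  have hpoint : (a + x) / (2 * a) * (t * a) + (a - x) / (2 * a) * -(t * a) = t * x := by
    field_simp; ring
  simp only [smul_eq_mul, hpoint] at h
  refine h.trans_eq ?_
  rw [cosh_eq, sinh_eq]; field_simp; ring

lemma exp_le_exp_two_mul_sq_add_one (u : ℝ) : exp u ≤ exp (2 * u ^ 2) + 1 := by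
  have h1 : 1 ≤ exp (2 * u ^ 2) := one_le_exp (by positivity)
  rcases le_or_gt (1 / 2) u with hu | hu
  · linarith [exp_le_exp.2 (by nlinarith : u ≤ 2 * u ^ 2)]
  · have hhalf : exp (1 / 2) ≤ 5 / 3 := by
      have := exp_le_two_add_div_two_sub (x := 1 / 2) (by norm_num) (by norm_num)
      norm_num at this ⊢; linarith
    linarith [exp_lt_exp.2 hu]

lemma exp_mul_mul_cosh_add_div_mul_sinh_le {a s t u r : ℝ} (ha : 0 < a) (ht : 0 ≤ t)
    (hu : 0 ≤ u) (hr : |r| ≤ a) (hrs : r * s ≤ 0) :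
    exp (t * s) * (cosh u + r / a * sinh u) ≤ exp (2 * u ^ 2) * exp (t * s) + 1 := by
  have hsinh : 0 ≤ sinh u := sinh_nonneg_iff.2 hu
  rcases lt_or_ge 0 s with hs | hs
  · have hr : r / a * sinh u ≤ 0 :=
      mul_nonpos_of_nonpos_of_nonneg (div_nonpos_of_nonpos_of_nonneg (by nlinarith) ha.le) hsinh
    have hcosh : cosh u ≤ exp (2 * u ^ 2) :=
      (cosh_le_exp_half_sq u).trans (exp_le_exp.2 (by nlinarith))
    nlinarith [exp_pos (t * s)]
  · have hr : r / a * sinh u ≤ sinh u :=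
      mul_le_of_le_one_left hsinh ((div_le_one ha).2 (abs_le.1 hr).2)
    have hexp : cosh u + sinh u ≤ exp (2 * u ^ 2) + 1 :=
      (cosh_add_sinh u).trans_le (exp_le_exp_two_mul_sq_add_one u)
    have hts : exp (t * s) ≤ 1 := exp_le_one_iff.2 (mul_nonpos_of_nonneg_of_nonpos ht hs)
    nlinarith [exp_pos (t * s)]

lemma le_mul_pow_add_of_le_mul_add_one {a : ℕ → ℝ} {c : ℝ} (hc : 1 ≤ c) (h0 : a 0 ≤ 1)
    (hstep : ∀ k, a (k + 1) ≤ c * a k + 1) {n : ℕ} (hn : 1 ≤ n) :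
    a n ≤ n * c ^ n + n := by
  induction n, hn using Nat.le_induction with
  | base => simpa using (hstep 0).trans (by nlinarith)
  | succ k _ ih =>
    have hbern : 1 + (k + 1 : ℕ) * (c - 1) ≤ c ^ (k + 1) := by
      simpa using one_add_mul_le_pow (by linarith : -2 ≤ c - 1) (k + 1)
    push_cast at hbern ⊢
    rw [pow_succ'] at hbern ⊢
    calc a (k + 1) ≤ c * (k * c ^ k + k) + 1 := (hstep k).trans (by gcongr)
      _ ≤ (k + 1) * (c * c ^ k) + (k + 1) := by linarith

section
variable {Ω : Type*} {m m₀ : MeasurableSpace Ω} {μ : Measure Ω} {X Y : Ω → ℝ} {a t : ℝ}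

lemma ae_norm_exp_mul_le (hbdd : ∀ᵐ ω ∂μ, |X ω| ≤ a) (t : ℝ) :
    ∀ᵐ ω ∂μ, ‖exp (t * X ω)‖ ≤ exp (|t| * a) := by
  filter_upwards [hbdd] with ω hω
  rw [norm_of_nonneg (exp_pos _).le, exp_le_exp]
  calc t * X ω ≤ |t| * |X ω| := (le_abs_self _).trans_eq (abs_mul _ _)
    _ ≤ |t| * a := mul_le_mul_of_nonneg_left hω (abs_nonneg t)

lemma MeasureTheory.Integrable.exp_mul_add (hY : Integrable (fun ω => exp (t * Y ω)) μ)
    (hX : AEStronglyMeasurable X μ) (hbdd : ∀ᵐ ω ∂μ, |X ω| ≤ a) :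
    Integrable (fun ω => exp (t * (Y ω + X ω))) μ := by
  simpa only [mul_add, exp_add] using
    hY.mul_bdd (continuous_exp.comp_aestronglyMeasurable (hX.const_mul t))
      (ae_norm_exp_mul_le hbdd t)

lemma condExp_exp_mul_le [IsFiniteMeasure μ] (hm : m ≤ m₀) (ha : 0 < a)
    (hX : AEStronglyMeasurable X μ) (hbdd : ∀ᵐ ω ∂μ, |X ω| ≤ a) (t : ℝ) :
    μ[fun ω => exp (t * X ω) | m] ≤ᵐ[μ]
      fun ω => cosh (t * a) + μ[X | m] ω / a * sinh (t * a) := by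
  have hXint : Integrable X μ := .of_bound hX a (by simpa only [norm_eq_abs] using hbdd)
  have hchord : (fun ω => exp (t * X ω)) ≤ᵐ[μ]
      (fun _ => cosh (t * a)) + (sinh (t * a) / a) • X := by
    filter_upwards [hbdd] with ω hω
    refine (exp_mul_le_cosh_add_div_mul_sinh ha hω).trans_eq ?_
    simp only [Pi.add_apply, Pi.smul_apply, smul_eq_mul]
    ring
  filter_upwards [condExp_mono (m := m)
      (.of_bound (continuous_exp.comp_aestronglyMeasurable (hX.const_mul t)) _
        (ae_norm_exp_mul_le hbdd t))
      ((integrable_const _).add (hXint.smul _)) hchord,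
    condExp_add (integrable_const (cosh (t * a))) (hXint.smul (sinh (t * a) / a)) m,
    condExp_smul (sinh (t * a) / a) X m] with ω hmono hadd hsmul
  rw [hadd, Pi.add_apply, hsmul, condExp_const hm] at hmono
  refine hmono.trans_eq ?_
  simp only [Pi.smul_apply, smul_eq_mul]
  ring

lemma integral_exp_mul_add_le [IsProbabilityMeasure μ] (hm : m ≤ m₀) (ha : 0 < a)
    (ht : 0 ≤ t)
    (hY : StronglyMeasurable[m] Y) (hYint : Integrable (fun ω => exp (t * Y ω)) μ)
    (hX : AEStronglyMeasurable X μ) (hbdd : ∀ᵐ ω ∂μ, |X ω| ≤ a)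
    (hmr : ∀ᵐ ω ∂μ, μ[X | m] ω * Y ω ≤ 0) :
    ∫ ω, exp (t * (Y ω + X ω)) ∂μ ≤ exp (2 * (t * a) ^ 2) * ∫ ω, exp (t * Y ω) ∂μ + 1 := by
  set c := exp (2 * (t * a) ^ 2)
  have hprod : (fun ω => exp (t * (Y ω + X ω))) =
      (fun ω => exp (t * Y ω)) * fun ω => exp (t * X ω) := by
    ext ω; simp only [Pi.mul_apply, mul_add, exp_add]
  have hcond : μ[fun ω => exp (t * (Y ω + X ω)) | m] ≤ᵐ[μ]
      fun ω => c * exp (t * Y ω) + 1 := by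
    have hXexp : Integrable (fun ω => exp (t * X ω)) μ :=
      .of_bound (continuous_exp.comp_aestronglyMeasurable (hX.const_mul t)) _
        (ae_norm_exp_mul_le hbdd t)
    have hpull := condExp_mul_of_stronglyMeasurable_left
      (continuous_exp.comp_stronglyMeasurable (hY.const_mul t))
      (hprod ▸ hYint.exp_mul_add hX hbdd) hXexp
    rw [hprod]
    filter_upwards [hpull, condExp_exp_mul_le hm ha hX hbdd t,
      ae_bdd_abs_condExp_of_ae_bdd_abs hbdd, hmr] with ω hpullω hchord hmean hmrω
    rw [hpullω, Pi.mul_apply]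
    calc _ ≤ exp (t * Y ω) * (cosh (t * a) + μ[X | m] ω / a * sinh (t * a)) :=
          mul_le_mul_of_nonneg_left hchord (exp_pos _).le
      _ ≤ _ := exp_mul_mul_cosh_add_div_mul_sinh_le ha ht (by positivity) hmean hmrω
  calc ∫ ω, exp (t * (Y ω + X ω)) ∂μ
      = ∫ ω, μ[fun ω => exp (t * (Y ω + X ω)) | m] ω ∂μ := (integral_condExp hm).symm
    _ ≤ ∫ ω, (c * exp (t * Y ω) + 1) ∂μ :=
        integral_mono_ae integrable_condExp
          ((hYint.const_mul c).add (integrable_const 1)) hcond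
    _ = c * ∫ ω, exp (t * Y ω) ∂μ + 1 := by
        rw [integral_add (hYint.const_mul c) (integrable_const 1), integral_const_mul]
        simp

end

/-- MGF bound for the partial sums under global mean reversion:
for every `λ ≥ 0` and `n ≥ 1`, `E[exp(λ S n)] ≤ n exp(n λ² σ² / 2) + n exp λ`. -/
theorem stmt3 {Ω : Type*} {m : MeasurableSpace Ω} (ℙ : Measure Ω) [IsProbabilityMeasure ℙ]
    (ℱ : Filtration ℕ m) (σ : ℝ) (hσ : 0 < σ)
    (X : ℕ → Ω → ℝ) (hadapted : Adapted ℱ X)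
    (hbdd : ∀ n, ∀ᵐ ω ∂ℙ, |X n ω| ≤ σ / 2)
    (S : ℕ → Ω → ℝ) (hS : ∀ n ω, S n ω = ∑ i ∈ Finset.Icc 1 n, X i ω)
    (hmr : ∀ n, ∀ᵐ ω ∂ℙ, (ℙ[X (n + 1) | ℱ n]) ω * S n ω ≤ 0) :
    ∀ (lam : ℝ), 0 ≤ lam → ∀ (n : ℕ), 1 ≤ n →
      ∫ ω, exp (lam * S n ω) ∂ℙ ≤
        n * exp (n * lam ^ 2 * σ ^ 2 / 2) + n * exp lam := by
  intro lam hlam n hn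
  have hS0 : ∀ ω, S 0 ω = 0 := fun ω => by simp [hS]
  have hSsucc : ∀ k ω, S (k + 1) ω = S k ω + X (k + 1) ω := fun k ω => by
    rw [hS, hS, sum_Icc_succ_top (Nat.le_add_left 1 k)]
  have hSm : ∀ k, StronglyMeasurable[ℱ k] (S k) := fun k => by
    rw [show S k = fun ω => ∑ i ∈ Icc 1 k, X i ω from funext (hS k)]
    exact Finset.stronglyMeasurable_fun_sum _ fun i hi =>
      ((hadapted i).mono (ℱ.mono (mem_Icc.1 hi).2) le_rfl).stronglyMeasurable
  have hXm : ∀ k, AEStronglyMeasurable (X k) ℙ := fun k =>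
    ((hadapted k).mono (ℱ.le k) le_rfl).aestronglyMeasurable
  have hint : ∀ k, Integrable (fun ω => exp (lam * S k ω)) ℙ := by
    intro k
    induction k with
    | zero => simp [hS0]
    | succ k ih => simpa only [hSsucc] using ih.exp_mul_add (hXm (k + 1)) (hbdd (k + 1))
  have hconst : exp (2 * (lam * (σ / 2)) ^ 2) = exp (lam ^ 2 * σ ^ 2 / 2) := by ring_nf
  have hrec := le_mul_pow_add_of_le_mul_add_one (a := fun k => ∫ ω, exp (lam * S k ω) ∂ℙ)
    (one_le_exp (by positivity : 0 ≤ lam ^ 2 * σ ^ 2 / 2)) (by simp [hS0]) (fun k => by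
      simpa only [hSsucc, hconst] using integral_exp_mul_add_le (ℱ.le k) (half_pos hσ) hlam
        (hSm k) (hint k) (hXm (k + 1)) (hbdd (k + 1)) (hmr k)) hn
  rw [← exp_nat_mul] at hrec
  calc ∫ ω, exp (lam * S n ω) ∂ℙ ≤ n * exp (n * (lam ^ 2 * σ ^ 2 / 2)) + n := hrec
    _ ≤ n * exp (n * lam ^ 2 * σ ^ 2 / 2) + n * exp lam := by
      rw [← mul_div_assoc, ← mul_assoc]
      gcongr
      exact le_mul_of_one_le_right n.cast_nonneg (one_le_exp hlam)
end

section
/- Concentration under global mean reversion: Let X_n be an adapted process bounded in [-σ/2, σ/2] with S_n = ∑_{i=1}^n X_i satisfying E[X_{n+1}|F_n]·S_n ≤ 0 for all n. If nσ² > 2, then with probability at least 1-δ, |S_n| ≤ sqrt(2 n σ² log(2n/δ)). -/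
/-!
Chernoff's method with `l = 2L / t`, where `L = log (2n/δ)`, `t² = 2nσ²L` and `c = σ/2`.
Since `exp y ≤ 1 + y + y²` for `|y| ≤ 1`, conditioning on `ℱ k` gives
`E exp (l S_{k+1}) ≤ (1 + (lc)²) E exp (l S_k) + E [exp (l S_k) · l E[X_{k+1} | ℱ k]]`,
and mean reversion bounds the last term by `lc`: either the drift is nonpositive or `S_k ≤ 0`.
Hence `E exp (l S_n) ≤ (1 + (lc)²)ⁿ (1 + lcn)`; the polynomial factor `1 + lcn`, absent for
martingale differences, is what costs the extra `log n`. If `t ≥ nc` the event is empty, and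
otherwise `lc ≤ 1/4`, which makes the resulting bound at most `δ/2` for each tail.
-/

open MeasureTheory Finset Real

lemma exp_le_one_add_add_sq {x : ℝ} (hx : |x| ≤ 1) : exp x ≤ 1 + x + x ^ 2 := by
  linarith [(abs_le.1 (abs_exp_sub_one_sub_id_le hx)).2]

lemma exp_mul_mul_le_of_mul_nonpos {l s a c : ℝ} (hl : 0 ≤ l) (hc : 0 ≤ c) (hac : a ≤ c)
    (has : a * s ≤ 0) : exp (l * s) * (l * a) ≤ l * c := by
  rcases le_or_gt a 0 with ha | ha
  · nlinarith [mul_nonneg (exp_pos (l * s)).le (mul_nonneg hl (neg_nonneg.2 ha)), mul_nonneg hl hc]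
  · have hs : s ≤ 0 := nonpos_of_mul_nonpos_right has ha
    have : exp (l * s) ≤ 1 := exp_le_one_iff.2 (mul_nonpos_of_nonneg_of_nonpos hl hs)
    nlinarith [mul_nonneg hl ha.le]

lemma le_pow_mul_one_add_mul_of_le_mul_add {u : ℕ → ℝ} {a b : ℝ} (ha : 1 ≤ a) (hb : 0 ≤ b)
    (h0 : u 0 ≤ 1) (hu : ∀ k, u (k + 1) ≤ a * u k + b) (n : ℕ) :
    u n ≤ a ^ n * (1 + b * n) := by
  induction n with
  | zero => simpa using h0
  | succ k ih =>
    have hak : 1 ≤ a ^ (k + 1) := one_le_pow₀ ha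
    calc u (k + 1) ≤ a * (a ^ k * (1 + b * k)) + b :=
          (hu k).trans (by gcongr)
      _ ≤ a ^ (k + 1) * (1 + b * (k + 1 : ℕ)) := by
          have : a ^ (k + 1) * (1 + b * (k + 1 : ℕ))
              = a * (a ^ k * (1 + b * k)) + a ^ (k + 1) * b := by
            push_cast; ring
          nlinarith [mul_le_mul_of_nonneg_right hak hb]

section MeanReversion

variable {Ω : Type*} {mΩ : MeasurableSpace Ω} {μ : Measure Ω}

lemma integrable_exp_mul_of_ae_abs_le [IsFiniteMeasure μ] {Y : Ω → ℝ} {c l : ℝ}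
    (hY : AEStronglyMeasurable Y μ) (hYc : ∀ᵐ ω ∂μ, |Y ω| ≤ c) (hl : 0 ≤ l) :
    Integrable (fun ω ↦ exp (l * Y ω)) μ := by
  refine .of_bound (continuous_exp.comp_aestronglyMeasurable (hY.const_mul l)) (exp (l * c)) ?_
  filter_upwards [hYc] with ω hω
  rw [norm_of_nonneg (exp_pos _).le]
  exact exp_le_exp.2 (mul_le_mul_of_nonneg_left (abs_le.1 hω).2 hl)

section CondExp

variable {m : MeasurableSpace Ω}

lemma ae_condExp_le_const [IsFiniteMeasure μ] (hm : m ≤ mΩ) {Y : Ω → ℝ} {c : ℝ}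
    (hY : Integrable Y μ) (hYc : ∀ᵐ ω ∂μ, Y ω ≤ c) : ∀ᵐ ω ∂μ, μ[Y | m] ω ≤ c := by
  filter_upwards [condExp_mono (m := m) hY (integrable_const c) hYc] with ω hω
  rwa [condExp_const hm] at hω

lemma ae_condExp_exp_mul_le [IsFiniteMeasure μ] (hm : m ≤ mΩ) {Y : Ω → ℝ} {c l : ℝ}
    (hY : AEStronglyMeasurable[mΩ] Y μ) (hYc : ∀ᵐ ω ∂μ, |Y ω| ≤ c) (hl : 0 ≤ l)
    (hlc : l * c ≤ 1) :
    ∀ᵐ ω ∂μ, μ[fun ω ↦ exp (l * Y ω) | m] ω ≤ 1 + (l * c) ^ 2 + l * μ[Y | m] ω := by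
  have hYint : Integrable Y μ := .of_bound hY c (by simpa only [norm_eq_abs] using hYc)
  have hquad : (fun ω ↦ exp (l * Y ω)) ≤ᵐ[μ] fun ω ↦ 1 + (l * c) ^ 2 + l * Y ω := by
    filter_upwards [hYc] with ω hω
    have habs : |l * Y ω| ≤ l * c := by
      rw [abs_mul, abs_of_nonneg hl]; exact mul_le_mul_of_nonneg_left hω hl
    have hsq : (l * Y ω) ^ 2 ≤ (l * c) ^ 2 := sq_le_sq' (abs_le.1 habs).1 (abs_le.1 habs).2
    linarith [exp_le_one_add_add_sq (habs.trans hlc)]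
  have haffine : μ[fun ω ↦ 1 + (l * c) ^ 2 + l * Y ω | m]
      =ᵐ[μ] fun ω ↦ 1 + (l * c) ^ 2 + l * μ[Y | m] ω := by
    filter_upwards [condExp_add (integrable_const (1 + (l * c) ^ 2)) (hYint.const_mul l) m,
      condExp_smul (μ := μ) l Y m] with ω hadd hsmul
    simp only [Pi.add_def, condExp_const hm] at hadd
    rw [hadd]
    simp only [Pi.smul_apply, smul_eq_mul] at hsmul
    exact congrArg (1 + (l * c) ^ 2 + ·) hsmul
  filter_upwards [condExp_mono (integrable_exp_mul_of_ae_abs_le hY hYc hl)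
    ((integrable_const _).add (hYint.const_mul l)) hquad, haffine] with ω hmono heq
  exact hmono.trans_eq heq

end CondExp

def partialSum (X : ℕ → Ω → ℝ) (n : ℕ) : Ω → ℝ := fun ω ↦ ∑ i ∈ Icc 1 n, X i ω

section PartialSum

variable {X : ℕ → Ω → ℝ}

@[simp]
lemma partialSum_zero : partialSum X 0 = 0 := by
  ext ω; simp [partialSum]

lemma partialSum_succ (n : ℕ) (ω : Ω) :
    partialSum X (n + 1) ω = partialSum X n ω + X (n + 1) ω :=
  sum_Icc_succ_top (Nat.le_add_left 1 n) _

lemma partialSum_neg (n : ℕ) : partialSum (-X) n = -partialSum X n := by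
  ext ω; simp [partialSum]

lemma Adapted.measurable_partialSum {ℱ : Filtration ℕ mΩ} (hX : Adapted ℱ X) (n : ℕ) :
    Measurable[ℱ n] (partialSum X n) :=
  Finset.measurable_fun_sum _ fun _ hi ↦ hX.measurable_le (mem_Icc.1 hi).2

lemma ae_abs_partialSum_le {c : ℝ} (hX : ∀ n, ∀ᵐ ω ∂μ, |X n ω| ≤ c) (n : ℕ) :
    ∀ᵐ ω ∂μ, |partialSum X n ω| ≤ n * c := by
  filter_upwards [ae_all_iff.2 hX] with ω hω
  calc |partialSum X n ω| ≤ ∑ i ∈ Icc 1 n, |X i ω| := abs_sum_le_sum_abs _ _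
    _ ≤ ∑ i ∈ Icc 1 n, c := sum_le_sum fun i _ ↦ hω i
    _ = n * c := by simp

lemma measure_lt_abs_partialSum_eq_zero {c t : ℝ} (hX : ∀ n, ∀ᵐ ω ∂μ, |X n ω| ≤ c) {n : ℕ}
    (ht : n * c ≤ t) : μ {ω | t < |partialSum X n ω|} = 0 := by
  refine measure_mono_null (fun ω hω ↦ ?_) (ae_iff.1 (ae_abs_partialSum_le hX n))
  exact fun hle ↦ (not_lt.2 (hle.trans ht)) hω

end PartialSum

/-- Global mean reversion of a process with increments bounded by `c`: the conditional drift of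
the next increment never points away from the origin. -/
structure IsBoundedMeanReverting (μ : Measure Ω) (ℱ : Filtration ℕ mΩ) (X : ℕ → Ω → ℝ) (c : ℝ) :
    Prop where
  adapted : Adapted ℱ X
  ae_abs_le : ∀ n, ∀ᵐ ω ∂μ, |X n ω| ≤ c
  ae_condExp_mul_partialSum_nonpos : ∀ n, ∀ᵐ ω ∂μ, μ[X (n + 1) | ℱ n] ω * partialSum X n ω ≤ 0

namespace IsBoundedMeanReverting

variable {ℱ : Filtration ℕ mΩ} {X : ℕ → Ω → ℝ} {c : ℝ}

lemma neg (h : IsBoundedMeanReverting μ ℱ X c) : IsBoundedMeanReverting μ ℱ (-X) c where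
  adapted n := (h.adapted n).neg
  ae_abs_le n := by simpa using h.ae_abs_le n
  ae_condExp_mul_partialSum_nonpos n := by
    filter_upwards [h.ae_condExp_mul_partialSum_nonpos n, condExp_neg (μ := μ) (X (n + 1)) (ℱ n)]
      with ω hω hneg
    simpa [partialSum_neg, hneg] using hω

lemma nonneg [NeZero μ] (h : IsBoundedMeanReverting μ ℱ X c) : 0 ≤ c :=
  let ⟨_, hω⟩ := (h.ae_abs_le 0).exists
  (abs_nonneg _).trans hω

lemma integrable_exp_mul_partialSum [IsFiniteMeasure μ] (h : IsBoundedMeanReverting μ ℱ X c)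
    {l : ℝ} (hl : 0 ≤ l) (n : ℕ) : Integrable (fun ω ↦ exp (l * partialSum X n ω)) μ :=
  integrable_exp_mul_of_ae_abs_le
    ((Adapted.measurable_partialSum h.adapted n).mono (ℱ.le n) le_rfl).aestronglyMeasurable
    (ae_abs_partialSum_le h.ae_abs_le n) hl

lemma integral_exp_mul_partialSum_succ_le [IsProbabilityMeasure μ]
    (h : IsBoundedMeanReverting μ ℱ X c) {l : ℝ} (hl : 0 ≤ l) (hlc : l * c ≤ 1) (k : ℕ) :
    ∫ ω, exp (l * partialSum X (k + 1) ω) ∂μ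
      ≤ (1 + (l * c) ^ 2) * ∫ ω, exp (l * partialSum X k ω) ∂μ + l * c := by
  set f : Ω → ℝ := fun ω ↦ exp (l * partialSum X k ω)
  set g : Ω → ℝ := fun ω ↦ exp (l * X (k + 1) ω)
  have hf_meas : StronglyMeasurable[ℱ k] f := (continuous_exp.measurable.comp
    ((Adapted.measurable_partialSum h.adapted k).const_mul l)).stronglyMeasurable
  have hf_int : Integrable f μ := h.integrable_exp_mul_partialSum hl k
  have hprod : (fun ω ↦ exp (l * partialSum X (k + 1) ω)) = f * g := by
    ext ω; simp only [f, g, Pi.mul_apply, partialSum_succ, mul_add, exp_add]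
  have hX_meas : AEStronglyMeasurable (X (k + 1)) μ :=
    (h.adapted.measurable (i := k + 1)).aestronglyMeasurable
  have hfg_int : Integrable (f * g) μ := hprod ▸ h.integrable_exp_mul_partialSum hl (k + 1)
  have hpull : μ[f * g | ℱ k] =ᵐ[μ] f * μ[g | ℱ k] := condExp_mul_of_stronglyMeasurable_left
    hf_meas hfg_int (integrable_exp_mul_of_ae_abs_le hX_meas (h.ae_abs_le (k + 1)) hl)
  have hdrift : ∀ᵐ ω ∂μ, μ[X (k + 1) | ℱ k] ω ≤ c := ae_condExp_le_const (ℱ.le k)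
    (.of_bound hX_meas c (by simpa only [norm_eq_abs] using h.ae_abs_le (k + 1)))
    (by filter_upwards [h.ae_abs_le (k + 1)] with ω hω using (abs_le.1 hω).2)
  have hkey : μ[f * g | ℱ k] ≤ᵐ[μ] fun ω ↦ (1 + (l * c) ^ 2) * f ω + l * c := by
    filter_upwards [hpull, ae_condExp_exp_mul_le (ℱ.le k) hX_meas (h.ae_abs_le (k + 1)) hl hlc,
      hdrift, h.ae_condExp_mul_partialSum_nonpos k] with ω hpull hcond hdrift hmr
    rw [hpull, Pi.mul_apply]
    calc f ω * μ[g | ℱ k] ω ≤ f ω * (1 + (l * c) ^ 2 + l * μ[X (k + 1) | ℱ k] ω) :=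
          mul_le_mul_of_nonneg_left hcond (exp_pos _).le
      _ = (1 + (l * c) ^ 2) * f ω + f ω * (l * μ[X (k + 1) | ℱ k] ω) := by ring
      _ ≤ (1 + (l * c) ^ 2) * f ω + l * c := by
          linarith [exp_mul_mul_le_of_mul_nonpos hl h.nonneg hdrift hmr]
  calc ∫ ω, exp (l * partialSum X (k + 1) ω) ∂μ = ∫ ω, μ[f * g | ℱ k] ω ∂μ := by
        rw [hprod, integral_condExp (ℱ.le k)]
    _ ≤ ∫ ω, ((1 + (l * c) ^ 2) * f ω + l * c) ∂μ :=
        integral_mono_ae integrable_condExp ((hf_int.const_mul _).add (integrable_const _)) hkey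
    _ = (1 + (l * c) ^ 2) * ∫ ω, f ω ∂μ + l * c := by
        rw [integral_add (hf_int.const_mul _) (integrable_const _), integral_const_mul,
          integral_const]
        simp

lemma integral_exp_mul_partialSum_le [IsProbabilityMeasure μ]
    (h : IsBoundedMeanReverting μ ℱ X c) {l : ℝ} (hl : 0 ≤ l) (hlc : l * c ≤ 1) (n : ℕ) :
    ∫ ω, exp (l * partialSum X n ω) ∂μ ≤ (1 + (l * c) ^ 2) ^ n * (1 + l * c * n) :=
  le_pow_mul_one_add_mul_of_le_mul_add (u := fun n ↦ ∫ ω, exp (l * partialSum X n ω) ∂μ)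
    (le_add_of_nonneg_right (sq_nonneg _)) (mul_nonneg hl h.nonneg) (by simp)
    (h.integral_exp_mul_partialSum_succ_le hl hlc) n

lemma measure_ge_le [IsProbabilityMeasure μ] (h : IsBoundedMeanReverting μ ℱ X c) {l : ℝ}
    (hl : 0 ≤ l) (hlc : l * c ≤ 1) (t : ℝ) (n : ℕ) :
    μ {ω | t ≤ partialSum X n ω}
      ≤ ENNReal.ofReal (exp (-l * t) * ((1 + (l * c) ^ 2) ^ n * (1 + l * c * n))) := by
  rw [← ofReal_measureReal]
  refine ENNReal.ofReal_le_ofReal ?_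
  calc μ.real {ω | t ≤ partialSum X n ω}
        ≤ exp (-l * t) * ProbabilityTheory.mgf (partialSum X n) μ l :=
        ProbabilityTheory.measure_ge_le_exp_mul_mgf t hl (h.integrable_exp_mul_partialSum hl n)
    _ ≤ _ := by gcongr; exact h.integral_exp_mul_partialSum_le hl hlc n

lemma measure_lt_abs_le [IsProbabilityMeasure μ] (h : IsBoundedMeanReverting μ ℱ X c) {l : ℝ}
    (hl : 0 ≤ l) (hlc : l * c ≤ 1) (t : ℝ) (n : ℕ) :
    μ {ω | t < |partialSum X n ω|}
      ≤ ENNReal.ofReal (2 * (exp (-l * t) * ((1 + (l * c) ^ 2) ^ n * (1 + l * c * n)))) := by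
  have hneg := h.neg.measure_ge_le hl hlc t n
  simp only [partialSum_neg, Pi.neg_apply] at hneg
  calc μ {ω | t < |partialSum X n ω|}
        ≤ μ ({ω | t ≤ partialSum X n ω} ∪ {ω | t ≤ -partialSum X n ω}) :=
          measure_mono fun ω hω ↦ (lt_abs.1 hω).imp le_of_lt (le_of_lt (b := -partialSum X n ω))
    _ ≤ μ {ω | t ≤ partialSum X n ω} + μ {ω | t ≤ -partialSum X n ω} := measure_union_le _ _
    _ ≤ _ := by
        rw [ENNReal.ofReal_mul zero_le_two, ENNReal.ofReal_ofNat, two_mul]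
        exact add_le_add (h.measure_ge_le hl hlc t n) hneg

end IsBoundedMeanReverting

end MeanReversion

lemma exp_neg_two_mul_mul_pow_mul_le {n : ℕ} {L x : ℝ} (hn : 1 ≤ n) (hL : log 2 ≤ L) (hx : 0 ≤ x)
    (hx4 : x ≤ 1 / 4) (hxL : n * x ^ 2 = L / 2) :
    exp (-(2 * L)) * ((1 + x ^ 2) ^ n * (1 + x * n)) ≤ n * exp (-L) := by
  have hnR : (1 : ℝ) ≤ n := by exact_mod_cast hn
  have hpow : (1 + x ^ 2) ^ n ≤ exp (L / 2) :=
    calc (1 + x ^ 2) ^ n ≤ exp (x ^ 2) ^ n := by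
          gcongr; linarith [add_one_le_exp (x ^ 2)]
      _ = exp (L / 2) := by rw [← exp_nat_mul, hxL]
  have hlin : 1 + x * n ≤ n * exp (L / 2) := by
    have : 1 + x * n ≤ 1 + n / 4 := by nlinarith
    nlinarith [add_one_le_exp (L / 2), log_two_gt_d9]
  calc exp (-(2 * L)) * ((1 + x ^ 2) ^ n * (1 + x * n))
      ≤ exp (-(2 * L)) * (exp (L / 2) * (n * exp (L / 2))) := by gcongr
    _ = n * exp (-L) := by
        rw [show -L = -(2 * L) + L / 2 + L / 2 by ring, exp_add, exp_add]; ring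

/-- Concentration under global mean reversion: if `n σ² > 2`, then with
probability at least `1 - δ`, `|S n| ≤ sqrt(2 n σ² log(2n/δ))`. -/
theorem stmt4 {Ω : Type*} {m : MeasurableSpace Ω} (ℙ : Measure Ω) [IsProbabilityMeasure ℙ]
    (ℱ : Filtration ℕ m) (σ : ℝ) (hσ : 0 < σ)
    (X : ℕ → Ω → ℝ) (hadapted : Adapted ℱ X)
    (hbdd : ∀ n, ∀ᵐ ω ∂ℙ, |X n ω| ≤ σ / 2)
    (S : ℕ → Ω → ℝ) (hS : ∀ n ω, S n ω = ∑ i ∈ Finset.Icc 1 n, X i ω)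
    (hmr : ∀ n, ∀ᵐ ω ∂ℙ, (ℙ[X (n + 1) | ℱ n]) ω * S n ω ≤ 0)
    (δ : ℝ) (hδ : δ ∈ Set.Ioo (0:ℝ) 1) (n : ℕ) (hn : 2 < n * σ ^ 2) :
    ℙ {ω | Real.sqrt (2 * n * σ ^ 2 * Real.log (2 * n / δ)) < |S n ω|} ≤
      ENNReal.ofReal δ := by
  obtain rfl : S = partialSum X := funext fun k ↦ funext (hS k)
  obtain ⟨hδ0, hδ1⟩ := hδ
  have hn1 : 1 ≤ n := Nat.one_le_iff_ne_zero.2 (by rintro rfl; norm_num at hn)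
  have hnR : (1 : ℝ) ≤ n := by exact_mod_cast hn1
  set L := log (2 * n / δ)
  have hL : log 2 ≤ L := log_le_log two_pos (by rw [le_div_iff₀ hδ0]; nlinarith)
  have hL0 : 0 < L := (log_pos one_lt_two).trans_le hL
  set t := √(2 * n * σ ^ 2 * L)
  have ht2 : t ^ 2 = 2 * n * σ ^ 2 * L := sq_sqrt (by positivity)
  rcases le_or_gt ((n : ℝ) / 8) L with hLn | hLn
  · refine (measure_lt_abs_partialSum_eq_zero hbdd (le_sqrt_of_sq_le ?_)).trans_le zero_le
    nlinarith
  have ht : 0 < t := sqrt_pos.2 (by positivity)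
  set x := 2 * L / t * (σ / 2)
  have hx0 : 0 ≤ x := by positivity
  have hxL : n * x ^ 2 = L / 2 := by
    simp only [x, div_pow, mul_pow, ht2]; field_simp
  have hx4 : x ≤ 1 / 4 :=
    (pow_le_pow_iff_left₀ hx0 (by norm_num) two_ne_zero).1 (by nlinarith)
  have hlt : -(2 * L / t) * t = -(2 * L) := by field_simp
  have hexpL : n * exp (-L) = δ / 2 := by
    rw [exp_neg, exp_log (by positivity)]; field_simp
  refine ((IsBoundedMeanReverting.mk hadapted hbdd hmr).measure_lt_abs_le (by positivity)
    (hx4.trans (by norm_num)) t n).trans (ENNReal.ofReal_le_ofReal ?_)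
  calc _ = 2 * (exp (-(2 * L)) * ((1 + x ^ 2) ^ n * (1 + x * n))) := by rw [hlt]
    _ ≤ 2 * (n * exp (-L)) := by linarith [exp_neg_two_mul_mul_pow_mul_le hn1 hL hx0 hx4 hxL]
    _ = δ := by rw [hexpL]; ring
end

section
/- Deterministic drift bound for AR(k) means: Let γ_0,...,γ_{k-1} ≥ 0 with γ = ∑γ_τ < 1, μ ∈ [0,1], arbitrary initial values M_{-τ} ∈ [0,1], and define M̄_{t+1} = ∑_{τ=0}^{k-1} γ_τ M̄_{t-τ} + (1-γ)μ. Then the partial sums S̄_t = ∑_{s=1}^t M̄_s satisfy |S̄_t - tμ| ≤ γ(μ+k)/(1-γ) ≤ γ(k+1)/(1-γ) for all t ∈ ℕ. -/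
open Finset

/-- Deterministic drift bound for AR(k) means. For the linear recursion
`M̄_{t+1} = ∑_{τ<k} γ_τ M̄_{t-τ} + (1-γ) μ` with `M̄_t ∈ [0,1]` for `t ≤ 0`, the partial sums
satisfy `|S̄_t - t μ| ≤ γ(μ+k)/(1-γ) ≤ γ(k+1)/(1-γ)` for all `t`. -/
theorem stmt7 (k : ℕ) (hk : 1 ≤ k)
    (γ : ℕ → ℝ) (hγnn : ∀ τ, 0 ≤ γ τ)
    (γs : ℝ) (hγs : γs = ∑ τ ∈ Finset.range k, γ τ) (hγlt : γs < 1)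
    (μ : ℝ) (hμ : μ ∈ Set.Icc (0:ℝ) 1)
    (Mb : ℤ → ℝ) (hMb0 : ∀ t : ℤ, t ≤ 0 → Mb t ∈ Set.Icc (0:ℝ) 1)
    (hrec : ∀ t : ℕ, Mb ((t : ℤ) + 1) =
      (∑ τ ∈ Finset.range k, γ τ * Mb ((t : ℤ) - (τ : ℤ))) + (1 - γs) * μ) :
    ∀ t : ℕ,
      |(∑ s ∈ Finset.Icc 1 t, Mb (s : ℤ)) - t * μ| ≤ γs * (μ + k) / (1 - γs) ∧
      γs * (μ + k) / (1 - γs) ≤ γs * (k + 1) / (1 - γs) := by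
  obtain ⟨hμ0, hμ1⟩ := hμ
  have hγs0 : 0 ≤ γs := hγs ▸ Finset.sum_nonneg (fun τ _ => hγnn τ)
  have h1γ : 0 < 1 - γs := by linarith
  set C : ℝ := γs * (μ + k) / (1 - γs) with hC
  have hC0 : 0 ≤ C := by
    apply div_nonneg _ h1γ.le
    have : (0:ℝ) ≤ μ + k := by positivity
    exact mul_nonneg hγs0 this
  set D : ℕ → ℝ := fun t => (∑ s ∈ Finset.Icc 1 t, Mb (s : ℤ)) - t * μ with hD
  have hD0 : D 0 = 0 := by simp [hD]
  have hT : ∀ t : ℕ, D t = ∑ s ∈ Finset.range t, (Mb ((s:ℤ)+1) - μ) := by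
    intro t
    induction t with
    | zero => simpa using hD0
    | succ n ih =>
      rw [Finset.sum_range_succ, ← ih]
      simp only [hD]
      rw [Finset.sum_Icc_succ_top (by omega : 1 ≤ n+1)]
      push_cast
      ring
  have hrec' : ∀ t : ℕ, Mb ((t:ℤ)+1) - μ
      = ∑ τ ∈ Finset.range k, γ τ * (Mb ((t:ℤ)-(τ:ℤ)) - μ) := by
    intro t
    simp only [mul_sub]
    rw [Finset.sum_sub_distrib, ← Finset.sum_mul, ← hγs, hrec t]
    ring
  have hA : ∀ t : ℕ, D t
      = ∑ τ ∈ Finset.range k, γ τ * ∑ s ∈ Finset.range t, (Mb ((s:ℤ)-(τ:ℤ)) - μ) := by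
    intro t
    calc D t = ∑ s ∈ Finset.range t, ∑ τ ∈ Finset.range k, γ τ * (Mb ((s:ℤ)-(τ:ℤ)) - μ) :=
          (hT t).trans (Finset.sum_congr rfl fun s _ => hrec' s)
      _ = ∑ τ ∈ Finset.range k, ∑ s ∈ Finset.range t, γ τ * (Mb ((s:ℤ)-(τ:ℤ)) - μ) :=
          Finset.sum_comm
      _ = _ := Finset.sum_congr rfl fun τ _ => (Finset.mul_sum _ _ _).symm
  have hbd : ∀ u : ℤ, u ≤ 0 → |Mb u - μ| ≤ 1 := by
    intro u hu
    obtain ⟨h0, h1⟩ := hMb0 u hu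
    rw [abs_le]; constructor <;> linarith
  have hB : ∀ τ t : ℕ, |∑ s ∈ Finset.range t, (Mb ((s:ℤ)-(τ:ℤ)) - μ)|
      ≤ ((τ:ℝ)+1) + |D (t - (τ+1))| := by
    intro τ t
    by_cases h : t ≤ τ + 1
    · have h2 : t - (τ+1) = 0 := by omega
      rw [h2, hD0, abs_zero, add_zero]
      calc |∑ s ∈ Finset.range t, (Mb ((s:ℤ)-(τ:ℤ)) - μ)|
          ≤ ∑ s ∈ Finset.range t, |Mb ((s:ℤ)-(τ:ℤ)) - μ| :=
            Finset.abs_sum_le_sum_abs _ _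
        _ ≤ ∑ s ∈ Finset.range t, (1:ℝ) := by
            apply Finset.sum_le_sum
            intro s hs
            have hs' := Finset.mem_range.mp hs
            exact hbd _ (by omega)
        _ = (t:ℝ) := by simp
        _ ≤ (τ:ℝ)+1 := by exact_mod_cast h
    · push_neg at h
      obtain ⟨m, rfl⟩ : ∃ m, t = (τ+1) + m := ⟨t - (τ+1), by omega⟩
      have h2 : ((τ+1)+m) - (τ+1) = m := by omega
      rw [h2, Finset.sum_range_add]
      have hDm : (∑ j ∈ Finset.range m, (Mb (((((τ+1)+j : ℕ)):ℤ)-(τ:ℤ)) - μ)) = D m := by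
        rw [hT m]
        apply Finset.sum_congr rfl
        intro j _
        congr 2
        push_cast
        ring
      rw [hDm]
      calc |(∑ s ∈ Finset.range (τ+1), (Mb ((s:ℤ)-(τ:ℤ)) - μ)) + D m|
          ≤ |∑ s ∈ Finset.range (τ+1), (Mb ((s:ℤ)-(τ:ℤ)) - μ)| + |D m| := abs_add_le _ _
        _ ≤ ((τ:ℝ)+1) + |D m| := by
            have : |∑ s ∈ Finset.range (τ+1), (Mb ((s:ℤ)-(τ:ℤ)) - μ)| ≤ ((τ:ℝ)+1) := by
              calc |∑ s ∈ Finset.range (τ+1), (Mb ((s:ℤ)-(τ:ℤ)) - μ)|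
                  ≤ ∑ s ∈ Finset.range (τ+1), |Mb ((s:ℤ)-(τ:ℤ)) - μ| :=
                    Finset.abs_sum_le_sum_abs _ _
                _ ≤ ∑ s ∈ Finset.range (τ+1), (1:ℝ) := by
                    apply Finset.sum_le_sum
                    intro s hs
                    have hs' := Finset.mem_range.mp hs
                    exact hbd _ (by omega)
                _ = ((τ:ℝ)+1) := by simp
            linarith
  have hCe : (1 - γs) * C = γs * (μ + k) := by
    rw [hC]; field_simp
  have hmain : ∀ t : ℕ, |D t| ≤ C := by
    intro t
    induction t using Nat.strong_induction_on with
    | _ t ih =>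
      rcases Nat.eq_zero_or_pos t with rfl | hpos
      · rw [hD0, abs_zero]; exact hC0
      · rw [hA t]
        calc |∑ τ ∈ Finset.range k, γ τ * ∑ s ∈ Finset.range t, (Mb ((s:ℤ)-(τ:ℤ)) - μ)|
            ≤ ∑ τ ∈ Finset.range k, |γ τ * ∑ s ∈ Finset.range t, (Mb ((s:ℤ)-(τ:ℤ)) - μ)| :=
              Finset.abs_sum_le_sum_abs _ _
          _ ≤ ∑ τ ∈ Finset.range k, γ τ * ((k:ℝ) + C) := by
              apply Finset.sum_le_sum
              intro τ hτ
              rw [abs_mul, abs_of_nonneg (hγnn τ)]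
              apply mul_le_mul_of_nonneg_left _ (hγnn τ)
              calc |∑ s ∈ Finset.range t, (Mb ((s:ℤ)-(τ:ℤ)) - μ)|
                  ≤ ((τ:ℝ)+1) + |D (t - (τ+1))| := hB τ t
                _ ≤ (k:ℝ) + C := by
                    have hτk := Finset.mem_range.mp hτ
                    have h1 : (τ:ℝ)+1 ≤ (k:ℝ) := by exact_mod_cast hτk
                    have h2 : |D (t - (τ+1))| ≤ C := ih _ (by omega)
                    linarith
          _ = γs * ((k:ℝ) + C) := by rw [← Finset.sum_mul, ← hγs]
          _ ≤ C := by nlinarith [mul_nonneg hγs0 hμ0]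
  intro t
  refine ⟨hmain t, ?_⟩
  have hle : γs * (μ + (k:ℝ)) ≤ γs * ((k:ℝ) + 1) :=
    mul_le_mul_of_nonneg_left (by linarith) hγs0
  exact (div_le_div_iff_of_pos_right h1γ).mpr hle
end

section
/- Time-uniform Hoeffding bound via doubling: Let M_t be independent random variables in [0,1] with common mean μ. Then with probability at least 1-δ, for all 1 ≤ t ≤ T, |μ̂_t - μ| ≤ sqrt(log(2⌈log₂ T⌉/δ)/t), where μ̂_t is the sample mean. -/
/-!
For `l ≥ 0` the process `exp (l * ∑_{τ ≤ t} X τ)` of a sequence of independent centred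
variables is a product of independent nonnegative factors of mean `≥ 1`, hence a submartingale.
Doob's maximal inequality for it, with Hoeffding's lemma bounding the final moment generating
function, gives the maximal Hoeffding bound `P (∃ t ≤ n, ε ≤ ∑_{τ ≤ t} (M τ - μ)) ≤ exp (-2ε²/n)`,
and the same for `μ - M τ`. Every `1 ≤ t ≤ T` lies in a dyadic block `t ≤ 2^k ≤ 2t` with
`1 ≤ k ≤ ⌈log₂ T⌉`; on block `k` the deviation threshold `√(t log A)`, `A = 2⌈log₂ T⌉/δ`, is at
least `ε_k = √(2^k log A / 2)`, chosen so that each of the `2⌈log₂ T⌉` tail events has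
probability at most `exp (-2ε_k²/2^k) = 1/A`.
-/

open MeasureTheory ProbabilityTheory Finset Real
open scoped ENNReal NNReal

section

variable {Ω : Type*} {m : MeasurableSpace Ω} {P : Measure Ω} [IsProbabilityMeasure P]

lemma submartingale_prod_Icc {Y : ℕ → Ω → ℝ} (hY : ∀ i, StronglyMeasurable (Y i))
    (hindep : iIndepFun Y P) (hnonneg : ∀ i, 0 ≤ Y i) (hint : ∀ i, Integrable (Y i) P)
    (hmean : ∀ i, 1 ≤ P[Y i]) :
    Submartingale (fun n => ∏ i ∈ Icc 1 n, Y i) (Filtration.natural Y hY) P := by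
  have hprod_succ : ∀ n, ∏ i ∈ Icc 1 (n + 1), Y i = (∏ i ∈ Icc 1 n, Y i) * Y (n + 1) :=
    fun n => prod_Icc_succ_top (by omega) Y
  have hadp : StronglyAdapted (Filtration.natural Y hY) (fun n => ∏ i ∈ Icc 1 n, Y i) :=
    fun n => Finset.stronglyMeasurable_prod _ fun i hi =>
      (Filtration.stronglyAdapted_natural hY i).mono (Filtration.mono _ (mem_Icc.mp hi).2)
  have hprod_int : ∀ n, Integrable (∏ i ∈ Icc 1 n, Y i) P := by
    intro n
    induction n with
    | zero => simp only [zero_lt_one, Icc_eq_empty_of_lt, prod_empty]; exact integrable_const 1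
    | succ n ih =>
      rw [hprod_succ]
      exact (hindep.indepFun_finsetProd_of_notMem (fun i => (hY i).measurable)
        (by simp)).integrable_mul ih (hint _)
  refine submartingale_nat hadp hprod_int fun n => ?_
  filter_upwards [hprod_succ n ▸ condExp_mul_of_stronglyMeasurable_left (hadp n)
      (hprod_succ n ▸ hprod_int (n + 1)) (hint (n + 1)),
    hindep.condExp_natural_ae_eq_of_lt hY n.lt_succ_self] with ω hpull hindep_eq
  rw [hpull, Pi.mul_apply, hindep_eq, prod_apply]
  exact le_mul_of_one_le_right (prod_nonneg fun i _ => hnonneg i ω) (hmean _)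

lemma measure_exists_sum_Icc_ge_le_exp_mul_mgf {X : ℕ → Ω → ℝ} (hmeas : ∀ i, Measurable (X i))
    (hindep : iIndepFun X P) {l : ℝ} (hl : 0 ≤ l)
    (hint : ∀ i, Integrable (fun ω => exp (l * X i ω)) P) (hmgf : ∀ i, 1 ≤ mgf (X i) P l)
    (n : ℕ) (ε : ℝ) :
    P {ω | ∃ t ∈ Icc 1 n, ε ≤ ∑ i ∈ Icc 1 t, X i ω} ≤
      ENNReal.ofReal (exp (-l * ε) * mgf (fun ω => ∑ i ∈ Icc 1 n, X i ω) P l) := by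
  set Y : ℕ → Ω → ℝ := fun i ω => exp (l * X i ω)
  have hY : ∀ i, StronglyMeasurable (Y i) := fun i => ((hmeas i).const_mul l).exp.stronglyMeasurable
  have hYX : ∀ t ω, (∏ i ∈ Icc 1 t, Y i) ω = exp (l * ∑ i ∈ Icc 1 t, X i ω) := by
    intro t ω
    simp only [Y, prod_apply, mul_sum, exp_sum]
  have hsub := submartingale_prod_Icc hY
    (hindep.comp (fun _ x => exp (l * x)) fun _ => by fun_prop)
    (fun i ω => (exp_pos _).le) hint hmgf
  have hnonneg : 0 ≤ fun n => ∏ i ∈ Icc 1 n, Y i := fun n ω => by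
    simp only [Pi.zero_apply, hYX]; exact (exp_pos _).le
  set B := {ω | ((exp (l * ε)).toNNReal : ℝ) ≤ (range (n + 1)).sup' nonempty_range_add_one
    fun k => (∏ i ∈ Icc 1 k, Y i) ω}
  have hAB : {ω | ∃ t ∈ Icc 1 n, ε ≤ ∑ i ∈ Icc 1 t, X i ω} ⊆ B := by
    rintro ω ⟨t, ht, hω⟩
    refine le_trans ?_ (le_sup' (fun k => (∏ i ∈ Icc 1 k, Y i) ω)
      (mem_range_succ_iff.mpr (mem_Icc.mp ht).2))
    rw [Real.coe_toNNReal _ (exp_pos _).le, hYX, exp_le_exp]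
    exact mul_le_mul_of_nonneg_left hω hl
  have hDoob : ENNReal.ofReal (exp (l * ε)) * P B ≤
      ENNReal.ofReal (mgf (fun ω => ∑ i ∈ Icc 1 n, X i ω) P l) := by
    refine (maximal_ineq hsub hnonneg n).trans (ENNReal.ofReal_le_ofReal ?_)
    simp only [mgf, ← hYX]
    exact setIntegral_le_integral (hsub.integrable n) (.of_forall fun ω => hnonneg n ω)
  calc P {ω | ∃ t ∈ Icc 1 n, ε ≤ ∑ i ∈ Icc 1 t, X i ω}
      ≤ ENNReal.ofReal (exp (-l * ε)) * (ENNReal.ofReal (exp (l * ε)) * P B) := by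
        rw [← mul_assoc, ← ENNReal.ofReal_mul (exp_pos _).le, ← exp_add, neg_mul,
          neg_add_cancel, exp_zero, ENNReal.ofReal_one, one_mul]
        exact measure_mono hAB
    _ ≤ ENNReal.ofReal (exp (-l * ε) * mgf (fun ω => ∑ i ∈ Icc 1 n, X i ω) P l) := by
        rw [ENNReal.ofReal_mul (exp_pos _).le]
        gcongr

lemma one_le_mgf_of_integral_eq_zero {X : Ω → ℝ} (hX : Integrable X P) (hmean : P[X] = 0)
    {l : ℝ} (hint : Integrable (fun ω => exp (l * X ω)) P) : 1 ≤ mgf X P l :=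
  calc (1 : ℝ) = ∫ ω, (1 + l * X ω) ∂P := by
        rw [integral_add (integrable_const 1) (hX.const_mul l), integral_const_mul, hmean]
        simp
    _ ≤ mgf X P l :=
        integral_mono ((integrable_const 1).add (hX.const_mul l)) hint
          fun ω => by simpa [add_comm] using add_one_le_exp (l * X ω)

namespace ProbabilityTheory.HasSubgaussianMGF

variable {X : ℕ → Ω → ℝ} {c : ℝ≥0}

lemma measure_exists_sum_Icc_ge_le_of_iIndepFun (hmeas : ∀ i, Measurable (X i))
    (hindep : iIndepFun X P) (hX : ∀ i, HasSubgaussianMGF (X i) c P) (hmean : ∀ i, P[X i] = 0)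
    (n : ℕ) {ε : ℝ} (hε : 0 ≤ ε) :
    P {ω | ∃ t ∈ Icc 1 n, ε ≤ ∑ i ∈ Icc 1 t, X i ω} ≤
      ENNReal.ofReal (exp (-ε ^ 2 / (2 * n * c))) := by
  rcases (mul_nonneg (Nat.cast_nonneg n) c.coe_nonneg : (0 : ℝ) ≤ n * c).eq_or_lt with hnc | hnc
  · simp [mul_assoc, ← hnc, prob_le_one]
  set l := ε / (n * c)
  have hl : 0 ≤ l := by positivity
  have hsum_mgf : mgf (fun ω => ∑ i ∈ Icc 1 n, X i ω) P l ≤ exp (n * c * l ^ 2 / 2) := by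
    simpa using (sum_of_iIndepFun hindep (s := Icc 1 n) fun i _ => hX i).mgf_le l
  refine (measure_exists_sum_Icc_ge_le_exp_mul_mgf hmeas hindep hl
    (fun i => (hX i).integrable_exp_mul l)
    (fun i => one_le_mgf_of_integral_eq_zero (hX i).integrable (hmean i)
      ((hX i).integrable_exp_mul l)) n ε).trans (ENNReal.ofReal_le_ofReal ?_)
  calc exp (-l * ε) * mgf (fun ω => ∑ i ∈ Icc 1 n, X i ω) P l
      ≤ exp (-l * ε) * exp (n * c * l ^ 2 / 2) := by gcongr
    _ = exp (-ε ^ 2 / (2 * n * c)) := by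
        rw [← exp_add]
        congr 1
        simp only [l]
        field_simp
        ring

lemma measure_exists_abs_sum_Icc_ge_le_of_iIndepFun (hmeas : ∀ i, Measurable (X i))
    (hindep : iIndepFun X P) (hX : ∀ i, HasSubgaussianMGF (X i) c P) (hmean : ∀ i, P[X i] = 0)
    (n : ℕ) {ε : ℝ} (hε : 0 ≤ ε) :
    P {ω | ∃ t ∈ Icc 1 n, ε ≤ |∑ i ∈ Icc 1 t, X i ω|} ≤
      2 * ENNReal.ofReal (exp (-ε ^ 2 / (2 * n * c))) := by
  have hupper := measure_exists_sum_Icc_ge_le_of_iIndepFun hmeas hindep hX hmean n hε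
  have hlower := measure_exists_sum_Icc_ge_le_of_iIndepFun (X := fun i => -X i)
    (fun i => (hmeas i).neg) (hindep.comp (fun _ => Neg.neg) fun _ => measurable_neg)
    (fun i => (hX i).neg) (fun i => by simp [integral_neg, hmean i]) n hε
  have hsplit : {ω | ∃ t ∈ Icc 1 n, ε ≤ |∑ i ∈ Icc 1 t, X i ω|} ⊆
      {ω | ∃ t ∈ Icc 1 n, ε ≤ ∑ i ∈ Icc 1 t, X i ω} ∪
        {ω | ∃ t ∈ Icc 1 n, ε ≤ ∑ i ∈ Icc 1 t, (-X i) ω} := by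
    rintro ω ⟨t, ht, hω⟩
    rcases le_abs'.mp hω with hneg | hpos
    · exact Or.inr ⟨t, ht, by simp only [Pi.neg_apply, sum_neg_distrib]; linarith⟩
    · exact Or.inl ⟨t, ht, hpos⟩
  calc _ ≤ _ := measure_mono hsplit
    _ ≤ _ := measure_union_le _ _
    _ ≤ _ := add_le_add hupper hlower
    _ = _ := (two_mul _).symm

end ProbabilityTheory.HasSubgaussianMGF

lemma measure_exists_abs_sum_Icc_sub_ge_le_of_mem_Icc {M : ℕ → Ω → ℝ}
    (hmeas : ∀ t, Measurable (M t)) (hindep : iIndepFun M P)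
    (hbdd : ∀ t, ∀ᵐ ω ∂P, M t ω ∈ Set.Icc (0 : ℝ) 1) {μ : ℝ} (hmean : ∀ t, ∫ ω, M t ω ∂P = μ)
    (n : ℕ) {ε : ℝ} (hε : 0 ≤ ε) :
    P {ω | ∃ t ∈ Icc 1 n, ε ≤ |∑ τ ∈ Icc 1 t, (M τ ω - μ)|} ≤
      2 * ENNReal.ofReal (exp (-2 * ε ^ 2 / n)) := by
  have hX : ∀ t, HasSubgaussianMGF (fun ω => M t ω - μ) ((‖(1 : ℝ) - 0‖₊ / 2) ^ 2) P :=
    fun t => hmean t ▸ hasSubgaussianMGF_of_mem_Icc (hmeas t).aemeasurable (hbdd t)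
  have hcentered : ∀ t, P[fun ω => M t ω - μ] = 0 := fun t => by
    simp [integral_sub (Integrable.of_mem_Icc 0 1 (hmeas t).aemeasurable (hbdd t))
      (integrable_const μ), hmean t]
  have hc : -ε ^ 2 / (2 * n * (((‖(1 : ℝ) - 0‖₊ / 2) ^ 2 : ℝ≥0) : ℝ)) = -2 * ε ^ 2 / n := by
    simp only [sub_zero, nnnorm_one, NNReal.coe_pow, NNReal.coe_div, NNReal.coe_one,
      NNReal.coe_ofNat]
    ring
  rw [← hc]
  exact HasSubgaussianMGF.measure_exists_abs_sum_Icc_ge_le_of_iIndepFun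
    (fun t => (hmeas t).sub_const μ)
    (hindep.comp (fun _ x => x - μ) fun _ => measurable_sub_const μ) hX hcentered n hε

lemma measure_exists_abs_sum_Icc_sub_ge_sqrt_log_le {M : ℕ → Ω → ℝ}
    (hmeas : ∀ t, Measurable (M t)) (hindep : iIndepFun M P)
    (hbdd : ∀ t, ∀ᵐ ω ∂P, M t ω ∈ Set.Icc (0 : ℝ) 1) {μ : ℝ} (hmean : ∀ t, ∫ ω, M t ω ∂P = μ)
    (k : ℕ) {A : ℝ} (hA : 1 ≤ A) :
    P {ω | ∃ t ∈ Icc 1 (2 ^ k), sqrt (2 ^ k * log A / 2) ≤ |∑ τ ∈ Icc 1 t, (M τ ω - μ)|} ≤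
      ENNReal.ofReal (2 / A) := by
  refine (measure_exists_abs_sum_Icc_sub_ge_le_of_mem_Icc hmeas hindep hbdd hmean (2 ^ k)
    (sqrt_nonneg _)).trans_eq ?_
  have hexponent : -2 * sqrt (2 ^ k * log A / 2) ^ 2 / ((2 ^ k : ℕ) : ℝ) = -log A := by
    rw [sq_sqrt (by have := log_nonneg hA; positivity)]
    push_cast
    field_simp
  rw [hexponent, exp_neg, exp_log (by linarith), ← ENNReal.ofReal_ofNat 2,
    ← ENNReal.ofReal_mul zero_le_two, div_eq_mul_inv]

end

lemma sqrt_mul_lt_abs_sub_of_sqrt_div_lt {a s μ t : ℝ} (ht : 0 < t)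
    (h : sqrt (a / t) < |s / t - μ|) : sqrt (t * a) < |s - t * μ| :=
  calc sqrt (t * a) = t * sqrt (a / t) := by
        rw [← sqrt_sq ht.le, ← sqrt_mul (sq_nonneg t), sqrt_sq ht.le]
        congr 1
        field_simp
    _ < t * |s / t - μ| := mul_lt_mul_of_pos_left h ht
    _ = |s - t * μ| := by
        rw [← abs_of_pos ht, ← abs_mul, abs_of_pos ht]
        congr 1
        field_simp

lemma exists_mem_Icc_clog_le_two_pow_le_two_mul {t T : ℕ} (ht : 1 ≤ t) (htT : t ≤ T)
    (hT : 2 ≤ T) : ∃ k ∈ Icc 1 (Nat.clog 2 T), t ≤ 2 ^ k ∧ 2 ^ k ≤ 2 * t := by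
  refine ⟨max 1 (Nat.clog 2 t),
    mem_Icc.mpr ⟨le_max_left _ _,
      max_le (Nat.clog_pos one_lt_two hT) (Nat.clog_mono_right 2 htT)⟩,
    (Nat.le_pow_clog one_lt_two t).trans (Nat.pow_le_pow_right two_pos (le_max_right _ _)), ?_⟩
  rcases ht.eq_or_lt with rfl | ht
  · simp
  · have hpred := Nat.pow_pred_clog_lt_self one_lt_two ht
    rw [max_eq_right (Nat.clog_pos one_lt_two ht)]
    calc 2 ^ Nat.clog 2 t = 2 * 2 ^ (Nat.clog 2 t - 1) := by
          rw [← pow_succ', Nat.sub_add_cancel (Nat.clog_pos one_lt_two ht)]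
      _ ≤ 2 * t := Nat.mul_le_mul_left 2 hpred.le

/-- Time-uniform Hoeffding bound via doubling. If `M_t` are independent
random variables in `[0,1]` with common mean `μ`, then with probability at least `1-δ`,
for all `1 ≤ t ≤ T`, `|μ̂_t - μ| ≤ sqrt(log(2⌈log₂ T⌉/δ)/t)`. -/
theorem stmt9 {Ω : Type*} {m : MeasurableSpace Ω} (P : Measure Ω) [IsProbabilityMeasure P]
    (T : ℕ) (hT : 2 ≤ T)
    (M : ℕ → Ω → ℝ) (hmeas : ∀ t, Measurable (M t))
    (hindep : iIndepFun M P)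
    (hbdd : ∀ t, ∀ᵐ ω ∂P, M t ω ∈ Set.Icc (0:ℝ) 1)
    (μ : ℝ) (hmean : ∀ t, ∫ ω, M t ω ∂P = μ)
    (δ : ℝ) (hδ : δ ∈ Set.Ioo (0:ℝ) 1) :
    P {ω | ∃ t ∈ Finset.Icc 1 T,
        Real.sqrt (Real.log (2 * (Nat.clog 2 T) / δ) / t) <
          |(∑ τ ∈ Finset.Icc 1 t, M τ ω) / t - μ|} ≤ ENNReal.ofReal δ := by
  obtain ⟨hδ0, hδ1⟩ := hδ
  set L := Nat.clog 2 T
  have hL : (1 : ℝ) ≤ L := by exact_mod_cast Nat.clog_pos one_lt_two hT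
  set A : ℝ := 2 * L / δ
  have hA : 1 ≤ A := by rw [le_div_iff₀ hδ0]; nlinarith
  set E : ℕ → Set Ω := fun k =>
    {ω | ∃ t ∈ Icc 1 (2 ^ k), sqrt (2 ^ k * log A / 2) ≤ |∑ τ ∈ Icc 1 t, (M τ ω - μ)|}
  have hcover : {ω | ∃ t ∈ Icc 1 T, sqrt (log A / t) < |(∑ τ ∈ Icc 1 t, M τ ω) / t - μ|} ⊆
      ⋃ k ∈ Icc 1 L, E k := by
    rintro ω ⟨t, ht, hω⟩
    obtain ⟨ht1, htT⟩ := mem_Icc.mp ht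
    obtain ⟨k, hk, htk, hkt⟩ := exists_mem_Icc_clog_le_two_pow_le_two_mul ht1 htT hT
    refine Set.mem_biUnion hk ⟨t, mem_Icc.mpr ⟨ht1, htk⟩, ?_⟩
    have hkt' : (2 : ℝ) ^ k ≤ 2 * t := by exact_mod_cast hkt
    calc sqrt (2 ^ k * log A / 2) ≤ sqrt (t * log A) := sqrt_le_sqrt (by nlinarith [log_nonneg hA])
      _ ≤ |(∑ τ ∈ Icc 1 t, M τ ω) - t * μ| :=
          (sqrt_mul_lt_abs_sub_of_sqrt_div_lt (by positivity) hω).le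
      _ = |∑ τ ∈ Icc 1 t, (M τ ω - μ)| := by simp [sum_sub_distrib]
  calc _ ≤ P (⋃ k ∈ Icc 1 L, E k) := measure_mono hcover
    _ ≤ ∑ k ∈ Icc 1 L, P (E k) := measure_biUnion_finset_le _ _
    _ ≤ ∑ k ∈ Icc 1 L, ENNReal.ofReal (2 / A) := sum_le_sum fun k _ =>
        measure_exists_abs_sum_Icc_sub_ge_sqrt_log_le hmeas hindep hbdd hmean k hA
    _ = ENNReal.ofReal δ := by
        rw [sum_const, Nat.card_Icc, Nat.add_sub_cancel, nsmul_eq_mul, ← ENNReal.ofReal_natCast,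
          ← ENNReal.ofReal_mul (Nat.cast_nonneg _)]
        congr 1
        simp only [A]
        field_simp
end

section
/- Discretization loss of the market-making objective: Let F: [0,1] → [0,1] be nondecreasing, S = 1-F, μ ∈ [0,1], and J(b,a) = F(b)(μ-b) + S(a)(a-μ). Let A be the uniform grid {n/⌈√T⌉ : 0 ≤ n ≤ ⌈√T⌉}. Then T·sup_{b,a ∈ A} J(b,a) ≥ T·sup_{b,a ∈ [0,1]} J(b,a) - 2√T - 1. -/
open Finset Real

lemma stmt12_key (Fb Fb2 m b b2 e : ℝ) (h0 : 0 ≤ Fb) (h1 : Fb2 ≤ 1) (hm : Fb ≤ Fb2)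
    (hbm : b ≤ m) (hb : b ≤ b2) (hb2 : b2 ≤ b + e) :
    Fb * (m - b) ≤ Fb2 * (m - b2) + e := by nlinarith

/-- Discretization loss of the market-making objective. For `F` nondecreasing
with values in `[0,1]`, `S = 1 - F`, `μ ∈ [0,1]`, `J(b,a) = F(b)(μ-b) + S(a)(a-μ)`, and the
uniform grid `A = {n/⌈√T⌉ : 0 ≤ n ≤ ⌈√T⌉}`,
`T · sup_{b,a ∈ A} J(b,a) ≥ T · sup_{b,a ∈ [0,1]} J(b,a) - 2√T - 1`. -/
theorem stmt12 (T : ℕ) (hT : 1 ≤ T)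
    (F : ℝ → ℝ) (hFmono : Monotone F) (hFbdd : ∀ x, F x ∈ Set.Icc (0:ℝ) 1)
    (μ : ℝ) (hμ : μ ∈ Set.Icc (0:ℝ) 1)
    (J : ℝ → ℝ → ℝ) (hJ : ∀ b a, J b a = F b * (μ - b) + (1 - F a) * (a - μ))
    (A : Set ℝ) (hA : A = {x : ℝ | ∃ n : ℕ, n ≤ ⌈Real.sqrt T⌉₊ ∧ x = n / ⌈Real.sqrt T⌉₊}) :
    (T : ℝ) * sSup {y : ℝ | ∃ b ∈ A, ∃ a ∈ A, y = J b a} ≥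
      (T : ℝ) * sSup {y : ℝ | ∃ b ∈ Set.Icc (0:ℝ) 1, ∃ a ∈ Set.Icc (0:ℝ) 1, y = J b a} -
        2 * Real.sqrt T - 1 := by
  obtain ⟨hμ0, hμ1⟩ := hμ
  set N := ⌈Real.sqrt T⌉₊ with hNdef
  have hT1 : (1:ℝ) ≤ T := by exact_mod_cast hT
  have hsq : (1:ℝ) ≤ Real.sqrt T := by
    rw [show (1:ℝ) = Real.sqrt 1 by simp]
    exact Real.sqrt_le_sqrt hT1
  have hsqpos : (0:ℝ) < Real.sqrt T := lt_of_lt_of_le one_pos hsq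
  have hNR : Real.sqrt T ≤ (N:ℝ) := Nat.le_ceil _
  have hNpos : (0:ℝ) < N := lt_of_lt_of_le hsqpos hNR
  clear_value N
  -- grid points lie in [0,1]
  have hAsub : A ⊆ Set.Icc (0:ℝ) 1 := by
    rw [hA]
    rintro x ⟨n, hn, rfl⟩
    constructor
    · positivity
    · rw [div_le_one hNpos]; exact_mod_cast hn
  -- bound on J
  have hJbdd : ∀ b ∈ Set.Icc (0:ℝ) 1, ∀ a ∈ Set.Icc (0:ℝ) 1, J b a ≤ 2 := by
    rintro b ⟨hb0, hb1⟩ a ⟨ha0, ha1⟩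
    rw [hJ]
    obtain ⟨hFb0, hFb1⟩ := hFbdd b
    obtain ⟨hFa0, hFa1⟩ := hFbdd a
    nlinarith [mul_nonneg hFb0 hb0, mul_nonneg (sub_nonneg.mpr hFa1) hμ0]
  have hGbdd : BddAbove {y : ℝ | ∃ b ∈ A, ∃ a ∈ A, y = J b a} := by
    refine ⟨2, ?_⟩
    rintro y ⟨b, hb, a, ha, rfl⟩
    exact hJbdd b (hAsub hb) a (hAsub ha)
  have hFne : {y : ℝ | ∃ b ∈ Set.Icc (0:ℝ) 1, ∃ a ∈ Set.Icc (0:ℝ) 1, y = J b a}.Nonempty :=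
    ⟨J μ μ, μ, ⟨hμ0, hμ1⟩, μ, ⟨hμ0, hμ1⟩, rfl⟩
  -- main comparison
  have hmain : sSup {y : ℝ | ∃ b ∈ Set.Icc (0:ℝ) 1, ∃ a ∈ Set.Icc (0:ℝ) 1, y = J b a} ≤
      sSup {y : ℝ | ∃ b ∈ A, ∃ a ∈ A, y = J b a} + 2 / N := by
    apply csSup_le hFne
    rintro y ⟨b, ⟨hb0, hb1⟩, a, ⟨ha0, ha1⟩, rfl⟩
    set b' := min b μ with hb'
    set a' := max a μ with ha'
    have hb'0 : 0 ≤ b' := le_min hb0 hμ0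
    have hb'μ : b' ≤ μ := min_le_right _ _
    have hb'1 : b' ≤ 1 := le_trans hb'μ hμ1
    have ha'μ : μ ≤ a' := le_max_right _ _
    have ha'0 : 0 ≤ a' := le_trans hμ0 ha'μ
    have ha'1 : a' ≤ 1 := max_le ha1 hμ1
    -- step 1 : J b a ≤ J b' a'
    have hstep1 : J b a ≤ J b' a' := by
      rw [hJ, hJ]
      have h1 : F b * (μ - b) ≤ F b' * (μ - b') := by
        rcases le_total b μ with h | h
        · rw [hb', min_eq_left h]
        · rw [hb', min_eq_right h]
          obtain ⟨hFb0, _⟩ := hFbdd b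
          nlinarith
      have h2 : (1 - F a) * (a - μ) ≤ (1 - F a') * (a' - μ) := by
        rcases le_total μ a with h | h
        · rw [ha', max_eq_left h]
        · rw [ha', max_eq_right h]
          obtain ⟨_, hFa1⟩ := hFbdd a
          nlinarith
      linarith
    -- rounding
    set bs : ℕ := ⌈b' * N⌉₊ with hbs
    set as : ℕ := ⌊a' * N⌋₊ with has
    have hbsN : bs ≤ N := by
      rw [hbs, Nat.ceil_le]
      calc b' * N ≤ 1 * N := by nlinarith
        _ = (N:ℝ) := one_mul _
    have hasN : as ≤ N := by
      have : a' * N ≤ (N:ℝ) := by nlinarith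
      calc as ≤ ⌊(N:ℝ)⌋₊ := Nat.floor_le_floor this
        _ = N := Nat.floor_natCast _
    have hbmem : ((bs:ℝ)/N) ∈ A := by rw [hA]; exact ⟨bs, hbsN, rfl⟩
    have hamem : ((as:ℝ)/N) ∈ A := by rw [hA]; exact ⟨as, hasN, rfl⟩
    have hb1' : b' ≤ (bs:ℝ)/N := by
      rw [le_div_iff₀ hNpos]; exact Nat.le_ceil _
    have hb2' : (bs:ℝ)/N ≤ b' + 1/N := by
      rw [div_le_iff₀ hNpos]
      have := Nat.ceil_lt_add_one (a := b' * (N:ℝ)) (by positivity)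
      rw [add_mul, div_mul_cancel₀ _ (ne_of_gt hNpos)]
      linarith
    have ha1' : (as:ℝ)/N ≤ a' := by
      rw [div_le_iff₀ hNpos]; exact Nat.floor_le (by positivity)
    have ha2' : a' - 1/N ≤ (as:ℝ)/N := by
      rw [le_div_iff₀ hNpos]
      have := Nat.sub_one_lt_floor (a' * N)
      rw [sub_mul, div_mul_cancel₀ _ (ne_of_gt hNpos)]
      linarith
    clear_value b' a' bs as
    -- step 2
    have hstep2 : J b' a' ≤ J ((bs:ℝ)/N) ((as:ℝ)/N) + 2/N := by
      rw [hJ, hJ]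
      obtain ⟨hFb'0, hFb'1⟩ := hFbdd b'
      obtain ⟨hFbs0, hFbs1⟩ := hFbdd ((bs:ℝ)/N)
      obtain ⟨hFa'0, hFa'1⟩ := hFbdd a'
      obtain ⟨hFas0, hFas1⟩ := hFbdd ((as:ℝ)/N)
      have hm1 : F b' ≤ F ((bs:ℝ)/N) := hFmono hb1'
      have hm2 : F ((as:ℝ)/N) ≤ F a' := hFmono ha1'
      have k1 : F b' * (μ - b') ≤ F ((bs:ℝ)/N) * (μ - (bs:ℝ)/N) + 1/N :=
        stmt12_key _ _ _ _ _ _ hFb'0 hFbs1 hm1 hb'μ hb1' (by linarith)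
      have k2 : (1 - F a') * (a' - μ) ≤ (1 - F ((as:ℝ)/N)) * ((as:ℝ)/N - μ) + 1/N := by
        have := stmt12_key (1 - F a') (1 - F ((as:ℝ)/N)) (-μ) (-a') (-((as:ℝ)/N)) (1/N)
          (by linarith) (by linarith) (by linarith) (by linarith) (by linarith) (by linarith)
        linarith [this]
      ring_nf at k1 k2 ⊢
      linarith
    have hin : J ((bs:ℝ)/N) ((as:ℝ)/N) ∈ {y : ℝ | ∃ b ∈ A, ∃ a ∈ A, y = J b a} :=
      ⟨_, hbmem, _, hamem, rfl⟩
    have := le_csSup hGbdd hin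
    linarith
  -- finish
  have hTpos : (0:ℝ) < T := lt_of_lt_of_le one_pos hT1
  have hdiv : (T:ℝ) * (2 / N) ≤ 2 * Real.sqrt T := by
    rw [mul_div_assoc']
    rw [div_le_iff₀ hNpos]
    have : Real.sqrt T * Real.sqrt T = (T:ℝ) := Real.mul_self_sqrt (le_of_lt hTpos)
    nlinarith
  have := mul_le_mul_of_nonneg_left hmain (le_of_lt hTpos)
  rw [mul_add] at this
  linarith
end

section
/- Survival of the optimal ask under valid confidence bounds: Let S = 1-F be nonincreasing, μ ∈ [0,1], and a* maximize (a-μ)S(a) over a finite set A with a* ≥ μ. Suppose the confidence bounds hold: Ŝ^low(x) ≤ S(x) ≤ Ŝ^up(x) for all x ∈ A, and μ ≤ μ̂^up. Then for any a < a* with a ≥ μ̂^up, (a - μ̂^up)Ŝ^low(a) ≤ (a* - μ̂^up)Ŝ^up(a*); i.e., the optimal ask cannot be eliminated by the pessimistic value of any lower ask. -/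
/-- Survival of the optimal ask under valid confidence bounds. For
nonincreasing `S`, `a*` maximizing `(a-μ)S(a)` over the finite set `A` with `a* ≥ μ`,
valid bounds `Ŝ^low ≤ S ≤ Ŝ^up` on `A` and `μ ≤ μ̂^up`, any `a ∈ A` with `a < a*`,
`a ≥ μ̂^up` satisfies `(a - μ̂^up)Ŝ^low(a) ≤ (a* - μ̂^up)Ŝ^up(a*)`. -/
theorem stmt15 (S Slow Sup : ℝ → ℝ) (hSmono : AntitoneOn S (Set.Icc (0:ℝ) 1))
    (hSbdd : ∀ x, S x ∈ Set.Icc (0:ℝ) 1)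
    (A : Finset ℝ) (hA : ∀ x ∈ A, x ∈ Set.Icc (0:ℝ) 1)
    (μ muup : ℝ) (hμ : μ ∈ Set.Icc (0:ℝ) 1) (hmuup : μ ≤ muup)
    (astar : ℝ) (hastarA : astar ∈ A) (hastarμ : μ ≤ astar)
    (hopt : ∀ x ∈ A, (x - μ) * S x ≤ (astar - μ) * S astar)
    (hbounds : ∀ x ∈ A, Slow x ≤ S x ∧ S x ≤ Sup x)
    (a : ℝ) (haA : a ∈ A) (ha : a < astar) (hamu : muup ≤ a) :
    (a - muup) * Slow a ≤ (astar - muup) * Sup astar := by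
  have hSa := hSmono (hA a haA) (hA astar hastarA) ha.le
  have h1 : (a - muup) * Slow a ≤ (a - muup) * S a :=
    mul_le_mul_of_nonneg_left (hbounds a haA).1 (by linarith)
  have h2 : (a - muup) * S a ≤ (astar - muup) * S astar := by
    have := hopt a haA
    nlinarith [hSbdd a, hSbdd astar]
  have h3 : (astar - muup) * S astar ≤ (astar - muup) * Sup astar :=
    mul_le_mul_of_nonneg_left (hbounds astar hastarA).2 (by linarith)
  linarith
end

section
/- Stability of the perturbed leader under uniform noise: Let g: [0,1]×ℝ → A be defined by g(m) = argmax_{b∈A} F̂(b)(m - b) for a finite set A and fixed F̂, let f: A → [0,1] be any function, and let ε ~ Unif(0, T^{-1/2}). If μ̂_{t+1} = μ̂_t + Δ with 0 ≤ Δ ≤ 1/(t+1), then E_ε[f(g(μ̂_{t+1} + ε))] ≤ E_ε[f(g(μ̂_t + ε))] + √T·Δ ≤ E_ε[f(g(μ̂_t + ε))] + √T/(t+1). -/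
open MeasureTheory intervalIntegral Real

/-- Stability of the perturbed leader under uniform noise. With
`g(m) = argmax_{b ∈ A} F̂(b)(m-b)`, `f : A → [0,1]`, `ε ~ Unif(0, T^{-1/2})` (so that
`E_ε[f(g(m+ε))] = √T ∫_0^{T^{-1/2}} f(g(m+x)) dx`), and `μ̂_{t+1} = μ̂_t + Δ` with
`0 ≤ Δ ≤ 1/(t+1)`, one has
`E_ε[f(g(μ̂_{t+1}+ε))] ≤ E_ε[f(g(μ̂_t+ε))] + √T·Δ ≤ E_ε[f(g(μ̂_t+ε))] + √T/(t+1)`. -/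
theorem stmt18 (T : ℕ) (hT : 1 ≤ T) (t : ℕ)
    (A : Finset ℝ) (hA : A.Nonempty) (Fhat : ℝ → ℝ)
    (f : ℝ → ℝ) (hf : ∀ x, f x ∈ Set.Icc (0:ℝ) 1)
    (g : ℝ → ℝ) (hgmem : ∀ m, g m ∈ A)
    (hgmax : ∀ m, ∀ b ∈ A, Fhat b * (m - b) ≤ Fhat (g m) * (m - g m))
    (hmeas : Measurable fun x => f (g x))
    (μ1 μ2 Δ : ℝ) (hμ2 : μ2 = μ1 + Δ) (hΔ : 0 ≤ Δ ∧ Δ ≤ 1 / (t + 1)) :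
    (Real.sqrt T * ∫ x in (0:ℝ)..(Real.sqrt T)⁻¹, f (g (μ2 + x))) ≤
      (Real.sqrt T * ∫ x in (0:ℝ)..(Real.sqrt T)⁻¹, f (g (μ1 + x))) + Real.sqrt T * Δ ∧
    (Real.sqrt T * ∫ x in (0:ℝ)..(Real.sqrt T)⁻¹, f (g (μ1 + x))) + Real.sqrt T * Δ ≤
      (Real.sqrt T * ∫ x in (0:ℝ)..(Real.sqrt T)⁻¹, f (g (μ1 + x))) + Real.sqrt T / (t + 1) := by
  obtain ⟨hΔ0, hΔ1⟩ := hΔ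
  set s : ℝ := (Real.sqrt T)⁻¹ with hs
  have hsq : (0:ℝ) ≤ Real.sqrt T := Real.sqrt_nonneg _
  have hs0 : 0 ≤ s := inv_nonneg.mpr hsq
  set h : ℝ → ℝ := fun x => f (g (μ1 + x)) with hh
  have hhmeas : Measurable h := by
    exact (hmeas.comp (measurable_const.add measurable_id))
  have hint : ∀ a b : ℝ, IntervalIntegrable h volume a b := by
    intro a b
    apply IntervalIntegrable.mono_fun' (g := fun _ => (1:ℝ))
    · exact intervalIntegrable_const
    · exact hhmeas.aestronglyMeasurable
    · filter_upwards with x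
      have := hf (g (μ1 + x))
      rw [Real.norm_eq_abs, abs_of_nonneg this.1]
      exact this.2
  have key : ∫ x in (0:ℝ)..s, f (g (μ2 + x)) = ∫ x in Δ..(Δ + s), h x := by
    have : (fun x => f (g (μ2 + x))) = fun x => h (Δ + x) := by
      funext x; simp [hh, hμ2]; ring_nf
    rw [this, intervalIntegral.integral_comp_add_left h Δ]
    norm_num
  have split1 : ∫ x in Δ..(Δ + s), h x =
      (∫ x in Δ..s, h x) + ∫ x in s..(Δ + s), h x :=
    (intervalIntegral.integral_add_adjacent_intervals (hint _ _) (hint _ _)).symm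
  have split2 : ∫ x in (0:ℝ)..s, h x =
      (∫ x in (0:ℝ)..Δ, h x) + ∫ x in Δ..s, h x :=
    (intervalIntegral.integral_add_adjacent_intervals (hint _ _) (hint _ _)).symm
  have hb1 : ∫ x in s..(Δ + s), h x ≤ Δ := by
    have : ∫ x in s..(Δ + s), h x ≤ ∫ x in s..(Δ + s), (1:ℝ) := by
      apply intervalIntegral.integral_mono_on (by linarith) (hint _ _) intervalIntegrable_const
      intro x _; exact (hf _).2
    simpa using this.trans_eq (by simp)
  have hb2 : 0 ≤ ∫ x in (0:ℝ)..Δ, h x :=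
    intervalIntegral.integral_nonneg hΔ0 (fun x _ => (hf _).1)
  have main : ∫ x in (0:ℝ)..s, f (g (μ2 + x)) ≤ (∫ x in (0:ℝ)..s, h x) + Δ := by
    rw [key, split1, split2]; linarith
  constructor
  · calc Real.sqrt T * ∫ x in (0:ℝ)..s, f (g (μ2 + x))
        ≤ Real.sqrt T * ((∫ x in (0:ℝ)..s, h x) + Δ) := by
          exact mul_le_mul_of_nonneg_left main hsq
      _ = (Real.sqrt T * ∫ x in (0:ℝ)..s, h x) + Real.sqrt T * Δ := by ring
  · have : Real.sqrt T * Δ ≤ Real.sqrt T * (1 / (t + 1)) :=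
      mul_le_mul_of_nonneg_left hΔ1 hsq
    have ht : Real.sqrt T * (1 / (t + 1)) = Real.sqrt T / (t + 1) := by ring
    linarith [this, ht ▸ this]
end
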